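/- arXiv:2207.03423 — 2 statements merged into one kernel-verified Lean document; each statement's English description precedes it below -/
import Mathlib

section
/- Fix a real number N > 1. For every ε > 0 there exist w̄ > 0 and δ̄ > 0 such that for every w ∈ (0, w̄] and every ξ ≥ 0 with G_N(ξ, w) ≤ 1 + δ̄, one has ξ ≤ (1+ε)·w^{1/N}. -/
/-!
With `t = 1/w - 1` and `p = (N-1)/N`, `G_N(ξ, w) = ((ξ+1)^N + t ξ^N)^p / ((ξ+1)^N - ξ^N)`.
If `ξ > (1+ε) w^{1/N}` and `w ≤ 1/2`, then `t ξ^N ≥ κ := (1+ε)^N / 2`. For `ξ` below a threshold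
`ξ₀`, the denominator is at most `(ξ₀+1)^N`, close to `1`, while the numerator is at least
`(1+κ)^p > 1`; `ξ₀` is chosen so that the quotient is at least `d = √((1+κ)^p) > 1`. For `ξ ≥ ξ₀`,
Bernoulli's inequality bounds the denominator by `N (ξ+1)^(N-1)`, so
`G_N ≥ t^p (ξ₀/(ξ₀+1))^(N-1) / N`, which also exceeds `d` once `w` is small.
-/
noncomputable section

/-- The auxiliary function `G_N(ξ, v)` from the paper. -/
def GN (N ξ v : ℝ) : ℝ :=
  ((ξ + 1) ^ N + (1 / v - 1) * ξ ^ N) ^ ((N - 1) / N) / ((ξ + 1) ^ N - ξ ^ N)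

open Filter Topology Set

lemma rpow_add_one_sub_rpow_le {N a : ℝ} (hN : 1 ≤ N) (ha : 0 ≤ a) :
    (a + 1) ^ N - a ^ N ≤ N * (a + 1) ^ (N - 1) := by
  have ha1 : 0 < a + 1 := by linarith
  have hfrac : -1 ≤ a / (a + 1) - 1 := by
    rw [le_sub_iff_add_le, neg_add_cancel]; positivity
  have hber : 1 + N * (a / (a + 1) - 1) ≤ (a / (a + 1)) ^ N := by
    simpa using one_add_mul_self_le_rpow_one_add hfrac hN
  rw [Real.div_rpow ha ha1.le, le_div_iff₀ (by positivity)] at hber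
  have hlhs : (1 + N * (a / (a + 1) - 1)) * (a + 1) ^ N
      = (a + 1) ^ N - N * ((a + 1) ^ N / (a + 1)) := by
    field_simp; ring
  rw [Real.rpow_sub_one ha1.ne']
  linarith

lemma rpow_add_one_sub_rpow_pos {N ξ : ℝ} (hN : 0 < N) (hξ : 0 ≤ ξ) :
    0 < (ξ + 1) ^ N - ξ ^ N :=
  sub_pos.2 (Real.rpow_lt_rpow hξ (lt_add_one ξ) hN)

lemma half_le_inv_sub_one_mul {b v X : ℝ} (hb : 0 ≤ b) (hv : 0 < v) (hv2 : v ≤ 1 / 2)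
    (h : b * v ≤ X) : b / 2 ≤ (1 / v - 1) * X := by
  have ht : 0 ≤ 1 / v - 1 := sub_nonneg.2 (one_le_one_div hv (by linarith))
  calc b / 2 ≤ (1 / v - 1) * (b * v) := by
        rw [show (1 / v - 1) * (b * v) = b * (1 - v) by field_simp]; nlinarith
    _ ≤ (1 / v - 1) * X := mul_le_mul_of_nonneg_left h ht

lemma eventually_le_inv_sub_one_rpow {p : ℝ} (hp : 0 < p) (K : ℝ) :
    ∀ᶠ w in 𝓝[>] (0 : ℝ), K ≤ (1 / w - 1) ^ p := by
  have h := (tendsto_rpow_atTop hp).comp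
    (tendsto_atTop_add_const_right _ (-1) tendsto_inv_nhdsGT_zero)
  filter_upwards [h.eventually_ge_atTop K] with w hw
  simpa [one_div, sub_eq_add_neg] using hw

lemma exists_pos_add_one_rpow_eq {N d : ℝ} (hN : 0 < N) (hd : 1 < d) :
    ∃ ξ₀ > 0, (ξ₀ + 1) ^ N = d :=
  ⟨d ^ (1 / N) - 1, sub_pos.2 (Real.one_lt_rpow hd (by positivity)), by
    rw [sub_add_cancel, one_div, Real.rpow_inv_rpow (by linarith) hN.ne']⟩

section GN

variable {N ξ v : ℝ}

lemma div_rpow_add_one_le_GN (hN : 1 ≤ N) (hv : 0 < v) (hv1 : v ≤ 1) (hξ : 0 ≤ ξ) :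
    (1 + (1 / v - 1) * ξ ^ N) ^ ((N - 1) / N) / (ξ + 1) ^ N ≤ GN N ξ v := by
  have ht : 0 ≤ 1 / v - 1 := sub_nonneg.2 (one_le_one_div hv hv1)
  have hp : 0 ≤ (N - 1) / N := div_nonneg (by linarith) (by linarith)
  have hA : 1 ≤ (ξ + 1) ^ N := Real.one_le_rpow (by linarith) (by linarith)
  unfold GN
  gcongr
  · exact rpow_add_one_sub_rpow_pos (by linarith) hξ
  · exact sub_le_self _ (Real.rpow_nonneg hξ N)

lemma rpow_div_le_GN_of_mul_rpow_lt {a : ℝ} (hN : 1 ≤ N) (hv : 0 < v) (hv2 : v ≤ 1 / 2)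
    (hξ : 0 ≤ ξ) (ha : 0 ≤ a) (h : a * v ^ (1 / N) < ξ) :
    (1 + a ^ N / 2) ^ ((N - 1) / N) / (ξ + 1) ^ N ≤ GN N ξ v := by
  have hN0 : 0 < N := by linarith
  have hξN : a ^ N * v < ξ ^ N := by
    have h := Real.rpow_lt_rpow (by positivity) h hN0
    rwa [Real.mul_rpow ha (by positivity), one_div, Real.rpow_inv_rpow hv.le hN0.ne'] at h
  have hκ : a ^ N / 2 ≤ (1 / v - 1) * ξ ^ N :=
    half_le_inv_sub_one_mul (by positivity) hv hv2 hξN.le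
  calc (1 + a ^ N / 2) ^ ((N - 1) / N) / (ξ + 1) ^ N
      ≤ (1 + (1 / v - 1) * ξ ^ N) ^ ((N - 1) / N) / (ξ + 1) ^ N := by
        gcongr
    _ ≤ GN N ξ v := div_rpow_add_one_le_GN hN hv (by linarith) hξ

lemma rpow_mul_div_le_GN_of_le {ξ₀ : ℝ} (hN : 1 ≤ N) (hv : 0 < v) (hv1 : v ≤ 1)
    (hξ₀ : 0 ≤ ξ₀) (hξ₀ξ : ξ₀ ≤ ξ) :
    (1 / v - 1) ^ ((N - 1) / N) * (ξ₀ / (ξ₀ + 1)) ^ (N - 1) / N ≤ GN N ξ v := by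
  have ht : 0 ≤ 1 / v - 1 := sub_nonneg.2 (one_le_one_div hv hv1)
  have hN0 : 0 < N := by linarith
  have hξ : 0 ≤ ξ := hξ₀.trans hξ₀ξ
  have hr : ξ₀ / (ξ₀ + 1) ≤ ξ / (ξ + 1) := by
    rw [div_le_div_iff₀ (by linarith) (by linarith)]; linarith
  have hnum : (1 / v - 1) ^ ((N - 1) / N) * ξ ^ (N - 1)
      = ((1 / v - 1) * ξ ^ N) ^ ((N - 1) / N) := by
    rw [Real.mul_rpow ht (Real.rpow_nonneg hξ N), ← Real.rpow_mul hξ,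
      mul_div_cancel₀ _ hN0.ne']
  calc (1 / v - 1) ^ ((N - 1) / N) * (ξ₀ / (ξ₀ + 1)) ^ (N - 1) / N
      ≤ (1 / v - 1) ^ ((N - 1) / N) * (ξ / (ξ + 1)) ^ (N - 1) / N := by
        gcongr
    _ = ((1 / v - 1) * ξ ^ N) ^ ((N - 1) / N) / (N * (ξ + 1) ^ (N - 1)) := by
        rw [Real.div_rpow hξ (by linarith), ← hnum]; ring
    _ ≤ GN N ξ v := by
        unfold GN
        gcongr
        · exact rpow_add_one_sub_rpow_pos hN0 hξ
        · exact le_add_of_nonneg_left (Real.rpow_nonneg (by linarith) N)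
        · exact rpow_add_one_sub_rpow_le hN hξ

end GN

/-- If `G_N(ξ, w)` is close to `1` and `w` is small, then `ξ ≤ (1+ε) w^{1/N}`. -/
theorem xi_small_of_GN_close_to_one (N : ℝ) (hN : 1 < N) :
    ∀ ε : ℝ, 0 < ε → ∃ wbar : ℝ, 0 < wbar ∧ ∃ δbar : ℝ, 0 < δbar ∧
      ∀ w : ℝ, 0 < w → w ≤ wbar → ∀ ξ : ℝ, 0 ≤ ξ →
        GN N ξ w ≤ 1 + δbar → ξ ≤ (1 + ε) * w ^ (1 / N) := by
  intro ε hε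
  have hN0 : 0 < N := by linarith
  have hp : 0 < (N - 1) / N := div_pos (by linarith) hN0
  set c := (1 + (1 + ε) ^ N / 2) ^ ((N - 1) / N)
  have hd : 1 < √c := by
    rw [Real.lt_sqrt zero_le_one, one_pow]
    exact Real.one_lt_rpow (by linarith [(by positivity : 0 < (1 + ε) ^ N / 2)]) hp
  obtain ⟨ξ₀, hξ₀, hξ₀d⟩ := exists_pos_add_one_rpow_eq hN0 hd
  obtain ⟨wbar, hwbar, hw⟩ := (nhdsGT_basis_Ioc (0 : ℝ)).eventually_iff.1 <|
    (eventually_le_inv_sub_one_rpow hp (N * √c / (ξ₀ / (ξ₀ + 1)) ^ (N - 1))).and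
      (Ioc_mem_nhdsGT (by norm_num : (0 : ℝ) < 1 / 2))
  refine ⟨wbar, hwbar, (√c - 1) / 2, by linarith, fun w hw0 hwle ξ hξ hG => ?_⟩
  obtain ⟨hK, -, hw2⟩ := hw ⟨hw0, hwle⟩
  by_contra! hlt
  suffices √c ≤ GN N ξ w by linarith
  rcases lt_or_ge ξ ξ₀ with hsmall | hlarge
  · calc √c = c / (ξ₀ + 1) ^ N := by rw [hξ₀d, Real.div_sqrt]
      _ ≤ c / (ξ + 1) ^ N := by gcongr
      _ ≤ GN N ξ w := rpow_div_le_GN_of_mul_rpow_lt hN.le hw0 hw2 hξ (by linarith) hlt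
  · calc √c ≤ (1 / w - 1) ^ ((N - 1) / N) * (ξ₀ / (ξ₀ + 1)) ^ (N - 1) / N := by
          rw [le_div_iff₀ hN0, ← div_le_iff₀ (by positivity), mul_comm]
          exact hK
      _ ≤ GN N ξ w := rpow_mul_div_le_GN_of_le hN.le hw0 (by linarith) hξ₀.le hlarge
end
end

section
/- Fix a real number N > 1. There exists w̄_N > 0, depending only on N, such that for every D' > 0, every probability CD(0,N) density h on [0,D'], and every w ∈ (0, w̄_N] satisfying D'·h(r_h(w)) ≤ 2N·w^{1−1/N}, there exists ξ ≥ 0 such that r_{N,D'}(ξ, w) ≤ r_h(w) and h_{N,D'}(ξ, r_{N,D'}(ξ, w)) ≤ h(r_h(w)). -/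
/-!
Let `φ = h ^ (1 / (N - 1))`, which is concave and nonnegative on `[0, D']`. For a line `ℓ` through
`(r, φ r)`, the function `φ - ℓ` is concave and vanishes at `r`, so it is nonpositive on `[r, D']`
as soon as it is nonnegative at some point left of `r`, and it is nonpositive on `[0, r]` as soon
as it is positive at some point right of `r`. Where `φ ≤ ℓ`, raising to the power `N - 1` bounds
`h` by `h r` times a power of an affine function, which can be integrated.

Taking for `ℓ` the line through the origin gives `(1 - w) N r^(N-1) ≤ h(r) (D'^N - r^N)`. Together
with `D' h(r) ≤ 2 N w^(1-1/N)` and `w` small this forces `r ≤ D'/4`; then the line through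
`(D', 0)` gives `h ≤ 2^(N-1) h(r)` on `[0, r]`, hence `w ≤ 2^(N-1) h(r) r` and `2^N w D' ≤ N r`.

If `r_{N,D'}(0, w) ≤ r`, the first bound already yields the claim for `ξ = 0`: the lower bound
`(1 - w) N t^(N-1) / (D'^N - t^N)` it gives for `h(r)` at `t = r` increases in `t`, and at
`t = r_{N,D'}(0, w)` it equals `h_{N,D'}(0, t)`. Otherwise Bernoulli's inequality and
`2^N w D' ≤ N r` give `r_{N,D'}(1, w) ≤ r`, so `r = r_{N,D'}(ξ, w)` for some `ξ ∈ [0, 1]`. The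
line through `(-ξ D', 0)` and `(r, φ r)` is the `(N-1)`-st root of a multiple of `h_{N,D'}(ξ, ·)`;
it dominates `φ` on `[r, D']` or on `[0, r]`, and comparing the mass of `h` and of the model
density on that side (`1 - w`, resp. `w`) gives `h_{N,D'}(ξ, r) ≤ h(r)`.
-/

open MeasureTheory

noncomputable section

/-- A `CD(0,N)` density on `[0, D']`: nonnegative on `[0, D']`, positive on `(0, D')`,
and `h^{1/(N-1)}` is concave on `[0, D']`. -/
def IsCDDensity (N D' : ℝ) (h : ℝ → ℝ) : Prop :=
  (∀ x ∈ Set.Icc (0:ℝ) D', 0 ≤ h x) ∧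
  (∀ x ∈ Set.Ioo (0:ℝ) D', 0 < h x) ∧
  ConcaveOn ℝ (Set.Icc (0:ℝ) D') (fun x => h x ^ (1 / (N - 1)))

/-- A probability `CD(0,N)` density on `[0, D']`. -/
def IsProbCDDensity (N D' : ℝ) (h : ℝ → ℝ) : Prop :=
  IsCDDensity N D' h ∧ (∫ x in Set.Icc (0:ℝ) D', h x) = 1

/-- The model density `h_{N,D}(ξ, ·)` on `[0, D]`. -/
def modelDensity (N D ξ x : ℝ) : ℝ :=
  (N / D ^ N) * (x + ξ * D) ^ (N - 1) / ((ξ + 1) ^ N - ξ ^ N)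

/-- The radius `r_{N,D}(ξ, v)`, the unique `r` with `∫_0^r h_{N,D}(ξ, x) dx = v`. -/
def modelRadius (N D ξ v : ℝ) : ℝ :=
  D * ((v * (1 + ξ) ^ N + (1 - v) * ξ ^ N) ^ (1 / N) - ξ)

open Set

namespace IsCDDensity

variable {N D' : ℝ} {h : ℝ → ℝ}

lemma root_rpow (hh : IsCDDensity N D' h) (hN : 1 < N) {x : ℝ} (hx : x ∈ Icc 0 D') :
    (h x ^ (1 / (N - 1))) ^ (N - 1) = h x := by
  rw [← Real.rpow_mul (hh.1 x hx), one_div_mul_cancel (by linarith), Real.rpow_one]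

lemma le_rpow_mul_of_root_le (hh : IsCDDensity N D' h) (hN : 1 < N) {x y k : ℝ}
    (hx : x ∈ Icc 0 D') (hy : y ∈ Icc 0 D') (hk : 0 ≤ k)
    (hle : h x ^ (1 / (N - 1)) ≤ k * h y ^ (1 / (N - 1))) : h x ≤ k ^ (N - 1) * h y :=
  calc h x = (h x ^ (1 / (N - 1))) ^ (N - 1) := (hh.root_rpow hN hx).symm
    _ ≤ (k * h y ^ (1 / (N - 1))) ^ (N - 1) :=
        Real.rpow_le_rpow (Real.rpow_nonneg (hh.1 x hx) _) hle (by linarith)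
    _ = k ^ (N - 1) * h y := by
        rw [Real.mul_rpow hk (Real.rpow_nonneg (hh.1 y hy) _), hh.root_rpow hN hy]

lemma concaveOn_root_sub_line (hh : IsCDDensity N D' h) (r c : ℝ) :
    ConcaveOn ℝ (Icc 0 D')
      fun x => h x ^ (1 / (N - 1)) - (x + c) / (r + c) * h r ^ (1 / (N - 1)) := by
  refine hh.2.2.sub ⟨convex_Icc 0 D', fun x _ y _ a b _ _ hab => le_of_eq ?_⟩
  simp only [smul_eq_mul]
  linear_combination (-(c / (r + c) * h r ^ (1 / (N - 1)))) * hab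

lemma le_rpow_div_mul_of_right (hh : IsCDDensity N D' h) (hN : 1 < N) {r : ℝ}
    (hr : r ∈ Ioc 0 D') :
    ∀ x ∈ Icc r D', h x ≤ (x / r) ^ (N - 1) * h r := by
  intro x hx
  have h0 : (0 : ℝ) ∈ Icc 0 D' := ⟨le_rfl, hr.1.le.trans hr.2⟩
  have hx' : x ∈ Icc 0 D' := ⟨hr.1.le.trans hx.1, hx.2⟩
  have key := (hh.concaveOn_root_sub_line r 0).right_le_of_le_left'' h0 hx' hr.1 hx.1 (by
    simp only [add_zero, div_self hr.1.ne', zero_div, zero_mul, sub_zero, one_mul, sub_self]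
    exact Real.rpow_nonneg (hh.1 0 h0) _)
  simp only [add_zero, div_self hr.1.ne', one_mul, sub_self, sub_nonpos] at key
  exact hh.le_rpow_mul_of_root_le hN hx' ⟨hr.1.le, hr.2⟩ (div_nonneg hx'.1 hr.1.le) key

lemma le_two_rpow_mul_of_left (hh : IsCDDensity N D' h) (hN : 1 < N) {r : ℝ} (hr : r ∈ Ico 0 D')
    (hr2 : 2 * r ≤ D') : ∀ x ∈ Icc 0 r, h x ≤ 2 ^ (N - 1) * h r := by
  intro x hx
  have hD : D' ∈ Icc 0 D' := ⟨hr.1.trans hr.2.le, le_rfl⟩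
  have hx' : x ∈ Icc 0 D' := ⟨hx.1, hx.2.trans hr.2.le⟩
  have hrD : r + -D' < 0 := by linarith [hr.2]
  have key := (hh.concaveOn_root_sub_line r (-D')).left_le_of_le_right'' hx' hD hx.2 hr.2 (by
    simp only [div_self hrD.ne, add_neg_cancel, zero_div, zero_mul, sub_zero, one_mul, sub_self]
    exact Real.rpow_nonneg (hh.1 D' hD) _)
  simp only [div_self hrD.ne, one_mul, sub_self, sub_nonpos] at key
  have hk : 0 ≤ (x + -D') / (r + -D') := div_nonneg_of_nonpos (by linarith [hx'.2]) hrD.le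
  have hk2 : (x + -D') / (r + -D') ≤ 2 := by rw [div_le_iff_of_neg hrD]; linarith [hx.1]
  calc h x ≤ ((x + -D') / (r + -D')) ^ (N - 1) * h r :=
        hh.le_rpow_mul_of_root_le hN hx' ⟨hr.1, hr.2.le⟩ hk key
    _ ≤ 2 ^ (N - 1) * h r := by
        gcongr
        exact hh.1 r ⟨hr.1, hr.2.le⟩

lemma le_rpow_div_mul_right_or_left (hh : IsCDDensity N D' h) (hN : 1 < N) {r c : ℝ}
    (hr : r ∈ Ioo 0 D') (hc : 0 ≤ c) :
    (∀ x ∈ Icc r D', h x ≤ ((x + c) / (r + c)) ^ (N - 1) * h r) ∨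
      ∀ x ∈ Icc 0 r, h x ≤ ((x + c) / (r + c)) ^ (N - 1) * h r := by
  set u := fun x => h x ^ (1 / (N - 1)) - (x + c) / (r + c) * h r ^ (1 / (N - 1))
  have hrc : 0 < r + c := by linarith [hr.1]
  have hur : u r = 0 := by simp only [u, div_self hrc.ne', one_mul, sub_self]
  have hr' : r ∈ Icc 0 D' := ⟨hr.1.le, hr.2.le⟩
  have of_nonpos : ∀ x ∈ Icc 0 D', u x ≤ 0 → h x ≤ ((x + c) / (r + c)) ^ (N - 1) * h r :=
    fun x hx hux => hh.le_rpow_mul_of_root_le hN hx hr'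
      (div_nonneg (by linarith [hx.1]) hrc.le) (sub_nonpos.1 hux)
  by_cases hright : ∀ y ∈ Icc r D', u y ≤ 0
  · exact Or.inl fun x hx => of_nonpos x ⟨hr.1.le.trans hx.1, hx.2⟩ (hright x hx)
  push Not at hright
  obtain ⟨y, hy, huy⟩ := hright
  have hry : r < y := lt_of_le_of_ne hy.1 (by rintro rfl; linarith)
  refine Or.inr fun x hx => of_nonpos x ⟨hx.1, hx.2.trans hr.2.le⟩ ?_
  rw [← hur]
  exact (hh.concaveOn_root_sub_line r c).left_le_of_le_right'' ⟨hx.1, hx.2.trans hr.2.le⟩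
    ⟨hr.1.le.trans hy.1, hy.2⟩ hx.2 hry (by linarith)

end IsCDDensity

lemma integral_mul_le_of_le_rpow_div_mul {f : ℝ → ℝ} {N a b c r H : ℝ} (hN : 1 ≤ N)
    (hab : a ≤ b) (hac : 0 ≤ a + c) (hrc : 0 < r + c) (hf : IntervalIntegrable f volume a b)
    (hle : ∀ x ∈ Icc a b, f x ≤ ((x + c) / (r + c)) ^ (N - 1) * H) :
    (∫ x in a..b, f x) * (N * (r + c) ^ (N - 1)) ≤ H * ((b + c) ^ N - (a + c) ^ N) := by
  have hle' : ∀ x ∈ Icc a b, f x ≤ H / (r + c) ^ (N - 1) * (x + c) ^ (N - 1) := by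
    intro x hx
    rw [div_mul_comm, ← Real.div_rpow (by linarith [hx.1]) hrc.le]
    exact hle x hx
  have hcont : Continuous fun x => H / (r + c) ^ (N - 1) * (x + c) ^ (N - 1) := by
    have := Real.continuous_rpow_const (by linarith : (0 : ℝ) ≤ N - 1)
    fun_prop
  have hmono := intervalIntegral.integral_mono_on hab hf (hcont.intervalIntegrable a b) hle'
  rw [intervalIntegral.integral_const_mul,
    intervalIntegral.integral_comp_add_right (fun x => x ^ (N - 1)),
    integral_rpow (Or.inl (by linarith)), sub_add_cancel] at hmono
  calc (∫ x in a..b, f x) * (N * (r + c) ^ (N - 1))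
      ≤ H / (r + c) ^ (N - 1) * (((b + c) ^ N - (a + c) ^ N) / N) * (N * (r + c) ^ (N - 1)) := by
        gcongr
    _ = H * ((b + c) ^ N - (a + c) ^ N) := by
        have : (r + c) ^ (N - 1) ≠ 0 := (Real.rpow_pos_of_pos hrc _).ne'
        field_simp

section ModelDensity

variable {N D ξ v : ℝ}

lemma modelRadius_add_mul (N D ξ v : ℝ) :
    modelRadius N D ξ v + ξ * D = D * (v * (1 + ξ) ^ N + (1 - v) * ξ ^ N) ^ (1 / N) := by
  unfold modelRadius
  ring

lemma modelDensity_eq (N D ξ x : ℝ) :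
    modelDensity N D ξ x = N * (x + ξ * D) ^ (N - 1) / (D ^ N * ((1 + ξ) ^ N - ξ ^ N)) := by
  unfold modelDensity
  rw [add_comm ξ 1, div_mul_eq_mul_div, div_div]

lemma one_add_rpow_sub_rpow_pos (hN : 0 < N) (hξ : 0 ≤ ξ) : 0 < (1 + ξ) ^ N - ξ ^ N :=
  sub_pos.2 (Real.rpow_lt_rpow hξ (by linarith) hN)

lemma modelRadius_add_mul_nonneg (hD : 0 ≤ D) (hξ : 0 ≤ ξ) (hv0 : 0 ≤ v) (hv1 : v ≤ 1) :
    0 ≤ modelRadius N D ξ v + ξ * D := by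
  have := sub_nonneg.2 hv1
  rw [modelRadius_add_mul]
  positivity

lemma modelRadius_add_mul_rpow (hN : 0 < N) (hD : 0 ≤ D) (hξ : 0 ≤ ξ) (hv0 : 0 ≤ v)
    (hv1 : v ≤ 1) :
    (modelRadius N D ξ v + ξ * D) ^ N = D ^ N * (v * (1 + ξ) ^ N + (1 - v) * ξ ^ N) := by
  have := sub_nonneg.2 hv1
  rw [modelRadius_add_mul, Real.mul_rpow hD (by positivity), ← Real.rpow_mul (by positivity),
    one_div_mul_cancel hN.ne', Real.rpow_one]

lemma modelDensity_modelRadius_le_of_right {r H : ℝ} (hN : 1 ≤ N) (hD : 0 < D) (hξ : 0 ≤ ξ)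
    (hv0 : 0 ≤ v) (hv1 : v < 1) (hH : 0 ≤ H) (hrad : modelRadius N D ξ v ≤ r)
    (htail : (1 - v) * (N * (r + ξ * D) ^ (N - 1)) ≤ H * ((D + ξ * D) ^ N - (r + ξ * D) ^ N)) :
    modelDensity N D ξ (modelRadius N D ξ v) ≤ H := by
  have ht := modelRadius_add_mul_nonneg (N := N) hD.le hξ hv0 hv1.le
  have hts : modelRadius N D ξ v + ξ * D ≤ r + ξ * D := by linarith
  have hP : 0 < (1 + ξ) ^ N - ξ ^ N := one_add_rpow_sub_rpow_pos (by linarith) hξ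
  have hgap : (D + ξ * D) ^ N - (modelRadius N D ξ v + ξ * D) ^ N
      = (1 - v) * (D ^ N * ((1 + ξ) ^ N - ξ ^ N)) := by
    rw [show D + ξ * D = D * (1 + ξ) by ring, Real.mul_rpow hD.le (by linarith),
      modelRadius_add_mul_rpow (by linarith) hD.le hξ hv0 hv1.le]
    ring
  rw [modelDensity_eq, div_le_iff₀ (by positivity)]
  refine le_of_mul_le_mul_left ?_ (sub_pos.2 hv1)
  calc (1 - v) * (N * (modelRadius N D ξ v + ξ * D) ^ (N - 1))
      ≤ (1 - v) * (N * (r + ξ * D) ^ (N - 1)) := by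
        gcongr
    _ ≤ H * ((D + ξ * D) ^ N - (r + ξ * D) ^ N) := htail
    _ ≤ H * ((D + ξ * D) ^ N - (modelRadius N D ξ v + ξ * D) ^ N) := by
        gcongr
    _ = (1 - v) * (H * (D ^ N * ((1 + ξ) ^ N - ξ ^ N))) := by
        rw [hgap]
        ring

lemma modelDensity_le_of_left {r H : ℝ} (hN : 0 < N) (hD : 0 < D) (hξ : 0 ≤ ξ) (hv0 : 0 < v)
    (hv1 : v ≤ 1) (hrad : modelRadius N D ξ v = r)
    (hhead : v * (N * (r + ξ * D) ^ (N - 1)) ≤ H * ((r + ξ * D) ^ N - (ξ * D) ^ N)) :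
    modelDensity N D ξ r ≤ H := by
  have hP : 0 < (1 + ξ) ^ N - ξ ^ N := one_add_rpow_sub_rpow_pos hN hξ
  have hgap : (r + ξ * D) ^ N - (ξ * D) ^ N = v * (D ^ N * ((1 + ξ) ^ N - ξ ^ N)) := by
    rw [← hrad, modelRadius_add_mul_rpow hN hD.le hξ hv0.le hv1,
      Real.mul_rpow hξ hD.le]
    ring
  rw [modelDensity_eq, div_le_iff₀ (by positivity)]
  refine le_of_mul_le_mul_left ?_ hv0
  calc v * (N * (r + ξ * D) ^ (N - 1)) ≤ H * ((r + ξ * D) ^ N - (ξ * D) ^ N) := hhead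
    _ = v * (H * (D ^ N * ((1 + ξ) ^ N - ξ ^ N))) := by
        rw [hgap]
        ring

lemma continuous_modelRadius (hN : 0 < N) (D v : ℝ) :
    Continuous fun ξ => modelRadius N D ξ v := by
  have := Real.continuous_rpow_const hN.le
  have := Real.continuous_rpow_const (one_div_nonneg.2 hN.le)
  unfold modelRadius
  fun_prop

lemma modelRadius_one_le {r : ℝ} (hN : 1 ≤ N) (hD : 0 < D) (hv : 0 ≤ v) (hr : 0 ≤ r)
    (hmass : 2 ^ N * v * D ≤ N * r) : modelRadius N D 1 v ≤ r := by
  have hN0 : 0 < N := by linarith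
  have hrD : 2 ^ N * v ≤ N * (r / D) := by
    rw [mul_div_assoc', le_div_iff₀ hD]
    exact hmass
  have hbase0 : 0 ≤ v * (1 + 1) ^ N + (1 - v) * 1 ^ N := by
    rw [Real.one_rpow, one_add_one_eq_two]
    nlinarith [Real.one_le_rpow (by norm_num : (1 : ℝ) ≤ 2) hN0.le]
  have hbase : v * (1 + 1) ^ N + (1 - v) * 1 ^ N ≤ (1 + r / D) ^ N :=
    calc v * (1 + 1) ^ N + (1 - v) * 1 ^ N ≤ 1 + N * (r / D) := by
          rw [Real.one_rpow, one_add_one_eq_two]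
          linarith
      _ ≤ (1 + r / D) ^ N :=
          one_add_mul_self_le_rpow_one_add (by linarith [div_nonneg hr hD.le]) hN
  have hroot : (v * (1 + 1) ^ N + (1 - v) * 1 ^ N) ^ (1 / N) ≤ 1 + r / D :=
    calc (v * (1 + 1) ^ N + (1 - v) * 1 ^ N) ^ (1 / N) ≤ ((1 + r / D) ^ N) ^ (1 / N) :=
          Real.rpow_le_rpow hbase0 hbase (by positivity)
      _ = 1 + r / D := by
          rw [one_div, Real.rpow_rpow_inv (by positivity) hN0.ne']
  unfold modelRadius
  calc D * ((v * (1 + 1) ^ N + (1 - v) * 1 ^ N) ^ (1 / N) - 1) ≤ D * (r / D) := by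
        gcongr
        linarith
    _ = r := mul_div_cancel₀ r hD.ne'

lemma exists_modelRadius_eq {r : ℝ} (hN : 0 < N) (h0 : r < modelRadius N D 0 v)
    (h1 : modelRadius N D 1 v ≤ r) : ∃ ξ ∈ Icc (0 : ℝ) 1, modelRadius N D ξ v = r :=
  intermediate_value_Icc' zero_le_one (continuous_modelRadius hN D v).continuousOn ⟨h1, h0.le⟩

end ModelDensity

def massThreshold (N : ℝ) : ℝ := min (1 / 2) (((1 / 4) ^ N) ^ (1 - 1 / N)⁻¹)

lemma massThreshold_pos (N : ℝ) : 0 < massThreshold N :=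
  lt_min (by norm_num) (by positivity)

lemma rpow_le_of_le_massThreshold {N w : ℝ} (hN : 1 < N) (hw : 0 ≤ w)
    (hwle : w ≤ massThreshold N) : w ^ (1 - 1 / N) ≤ (1 / 4) ^ N := by
  have he : 0 < 1 - 1 / N := by
    rw [sub_pos, div_lt_one (by linarith)]
    exact hN
  calc w ^ (1 - 1 / N) ≤ (((1 / 4) ^ N) ^ (1 - 1 / N)⁻¹) ^ (1 - 1 / N) :=
        Real.rpow_le_rpow hw (hwle.trans (min_le_right _ _)) he.le
    _ = (1 / 4) ^ N := Real.rpow_inv_rpow (by positivity) he.ne'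

namespace IsProbCDDensity

variable {N D' : ℝ} {h : ℝ → ℝ}

lemma intervalIntegrable (hh : IsProbCDDensity N D' h) {a b : ℝ} (ha : a ∈ Icc 0 D')
    (hb : b ∈ Icc 0 D') : IntervalIntegrable h volume a b := by
  have hint : IntegrableOn h (Icc 0 D') := by
    by_contra hc
    have htot := hh.2
    rw [integral_undef hc] at htot
    exact zero_ne_one htot
  exact (hint.mono_set (uIcc_subset_Icc ha hb)).intervalIntegrable

lemma integral_right_eq_one_sub (hh : IsProbCDDensity N D' h) {r : ℝ} (hr : r ∈ Icc 0 D') :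
    ∫ x in r..D', h x = 1 - ∫ x in 0..r, h x := by
  have hD : (0 : ℝ) ≤ D' := hr.1.trans hr.2
  have htot : ∫ x in 0..D', h x = 1 := by
    rw [intervalIntegral.integral_of_le hD, ← integral_Icc_eq_integral_Ioc]
    exact hh.2
  rw [← htot, ← intervalIntegral.integral_add_adjacent_intervals
    (hh.intervalIntegrable ⟨le_rfl, hD⟩ hr) (hh.intervalIntegrable hr ⟨hD, le_rfl⟩)]
  ring

lemma one_sub_mul_le_of_right (hh : IsProbCDDensity N D' h) (hN : 1 < N) {r w c : ℝ}
    (hr : r ∈ Ioo 0 D') (hrw : ∫ x in 0..r, h x = w) (hc : 0 ≤ c)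
    (hcomp : ∀ x ∈ Icc r D', h x ≤ ((x + c) / (r + c)) ^ (N - 1) * h r) :
    (1 - w) * (N * (r + c) ^ (N - 1)) ≤ h r * ((D' + c) ^ N - (r + c) ^ N) := by
  have hr' : r ∈ Icc 0 D' := ⟨hr.1.le, hr.2.le⟩
  rw [← hrw, ← hh.integral_right_eq_one_sub hr']
  exact integral_mul_le_of_le_rpow_div_mul hN.le hr.2.le (by linarith [hr.1]) (by linarith [hr.1])
    (hh.intervalIntegrable hr' ⟨hr.1.le.trans hr.2.le, le_rfl⟩) hcomp

lemma mul_le_of_left (hh : IsProbCDDensity N D' h) (hN : 1 < N) {r w c : ℝ}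
    (hr : r ∈ Ioo 0 D') (hrw : ∫ x in 0..r, h x = w) (hc : 0 ≤ c)
    (hcomp : ∀ x ∈ Icc 0 r, h x ≤ ((x + c) / (r + c)) ^ (N - 1) * h r) :
    w * (N * (r + c) ^ (N - 1)) ≤ h r * ((r + c) ^ N - c ^ N) := by
  have hr' : r ∈ Icc 0 D' := ⟨hr.1.le, hr.2.le⟩
  rw [← hrw]
  simpa only [zero_add] using integral_mul_le_of_le_rpow_div_mul hN.le hr.1.le (by linarith)
    (by linarith [hr.1]) (hh.intervalIntegrable ⟨le_rfl, hr.1.le.trans hr.2.le⟩ hr') hcomp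

lemma one_sub_mul_rpow_le (hh : IsProbCDDensity N D' h) (hN : 1 < N) {r w : ℝ}
    (hr : r ∈ Ioo 0 D') (hrw : ∫ x in 0..r, h x = w) :
    (1 - w) * (N * r ^ (N - 1)) ≤ h r * (D' ^ N - r ^ N) := by
  simpa using hh.one_sub_mul_le_of_right hN hr hrw le_rfl
    (by simpa using hh.1.le_rpow_div_mul_of_right hN ⟨hr.1, hr.2.le⟩)

lemma four_mul_le (hh : IsProbCDDensity N D' h) (hN : 1 < N) {r w : ℝ} (hr : r ∈ Ioo 0 D')
    (hrw : ∫ x in 0..r, h x = w) (hw : w ≤ 1 / 2) (hsmall : w ^ (1 - 1 / N) ≤ (1 / 4) ^ N)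
    (hhyp : D' * h r ≤ 2 * N * w ^ (1 - 1 / N)) : 4 * r ≤ D' := by
  have hD : 0 < D' := hr.1.trans hr.2
  have hhr : 0 ≤ h r := hh.1.1 r ⟨hr.1.le, hr.2.le⟩
  have htail := hh.one_sub_mul_rpow_le hN hr hrw
  have hrN : 0 < N * r ^ (N - 1) := by have := hr.1; positivity
  have key : N * r ^ (N - 1) ≤ N * (D' / 4) ^ (N - 1) :=
    calc N * r ^ (N - 1) ≤ 2 * ((1 - w) * (N * r ^ (N - 1))) := by nlinarith
      _ ≤ 2 * (h r * D' ^ N) := by nlinarith [Real.rpow_nonneg hr.1.le N]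
      _ = 2 * (D' * h r) * D' ^ (N - 1) := by
          rw [Real.rpow_sub_one hD.ne']
          field_simp
      _ ≤ 2 * (2 * N * (1 / 4) ^ N) * D' ^ (N - 1) := by
          gcongr 2 * ?_ * _
          exact hhyp.trans (by gcongr)
      _ = N * (D' / 4) ^ (N - 1) := by
          rw [Real.div_rpow hD.le (by norm_num), Real.rpow_sub_one (by norm_num : (4 : ℝ) ≠ 0),
            Real.div_rpow (by norm_num) (by norm_num), Real.one_rpow]
          field_simp
          ring
  have hr4 : r ≤ D' / 4 := (Real.rpow_le_rpow_iff hr.1.le (by positivity) (by linarith)).1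
    (le_of_mul_le_mul_left key (by linarith))
  linarith

lemma two_rpow_mul_le (hh : IsProbCDDensity N D' h) (hN : 1 < N) {r w : ℝ} (hr : r ∈ Ioo 0 D')
    (hrw : ∫ x in 0..r, h x = w) (hw0 : 0 < w) (hw : w ≤ 1 / 2)
    (hsmall : w ^ (1 - 1 / N) ≤ (1 / 4) ^ N) (hhyp : D' * h r ≤ 2 * N * w ^ (1 - 1 / N)) :
    2 ^ N * w * D' ≤ N * r := by
  have hD : 0 < D' := hr.1.trans hr.2
  have hr2 : 2 * r ≤ D' := by linarith [hh.four_mul_le hN hr hrw hw hsmall hhyp, hr.1]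
  have hhead : w ≤ 2 ^ (N - 1) * h r * r := by
    have := intervalIntegral.integral_mono_on hr.1.le
      (hh.intervalIntegrable ⟨le_rfl, hD.le⟩ ⟨hr.1.le, hr.2.le⟩) intervalIntegrable_const
      (hh.1.le_two_rpow_mul_of_left hN ⟨hr.1.le, hr.2⟩ hr2)
    rwa [hrw, intervalIntegral.integral_const, smul_eq_mul, sub_zero, mul_comm] at this
  set a := w ^ (1 - 1 / N)
  set b := w ^ (1 / N)
  have hw_eq : w = a * b := by rw [← Real.rpow_add hw0, sub_add_cancel, Real.rpow_one]
  have ha : 0 < a := Real.rpow_pos_of_pos hw0 _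
  have hb : b * D' ≤ 2 ^ N * N * r := by
    refine le_of_mul_le_mul_left ?_ ha
    calc a * (b * D') = w * D' := by rw [hw_eq]; ring
      _ ≤ 2 ^ (N - 1) * h r * r * D' := by gcongr
      _ = 2 ^ (N - 1) * r * (D' * h r) := by ring
      _ ≤ 2 ^ (N - 1) * r * (2 * N * a) := by have := hr.1; gcongr
      _ = a * (2 ^ N * N * r) := by
          rw [Real.rpow_sub_one two_ne_zero]
          ring
  calc 2 ^ N * w * D' = 2 ^ N * a * (b * D') := by rw [hw_eq]; ring
    _ ≤ 2 ^ N * (1 / 4) ^ N * (2 ^ N * N * r) := by gcongr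
    _ = (2 * (1 / 4) * 2) ^ N * (N * r) := by
        rw [Real.mul_rpow (by norm_num) (by norm_num), Real.mul_rpow (by norm_num) (by norm_num)]
        ring
    _ = N * r := by norm_num

lemma modelDensity_modelRadius_zero_le (hh : IsProbCDDensity N D' h) (hN : 1 < N) {r w : ℝ}
    (hr : r ∈ Ioo 0 D') (hrw : ∫ x in 0..r, h x = w) (hw0 : 0 ≤ w) (hw1 : w < 1)
    (h0 : modelRadius N D' 0 w ≤ r) : modelDensity N D' 0 (modelRadius N D' 0 w) ≤ h r :=
  modelDensity_modelRadius_le_of_right hN.le (hr.1.trans hr.2) le_rfl hw0 hw1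
    (hh.1.1 r ⟨hr.1.le, hr.2.le⟩) h0 (by simpa using hh.one_sub_mul_rpow_le hN hr hrw)

lemma modelDensity_le_of_modelRadius_eq (hh : IsProbCDDensity N D' h) (hN : 1 < N) {r w ξ : ℝ}
    (hr : r ∈ Ioo 0 D') (hrw : ∫ x in 0..r, h x = w) (hw0 : 0 < w) (hw1 : w < 1)
    (hξ : 0 ≤ ξ) (hrad : modelRadius N D' ξ w = r) : modelDensity N D' ξ r ≤ h r := by
  have hD : 0 < D' := hr.1.trans hr.2
  have hc : 0 ≤ ξ * D' := mul_nonneg hξ hD.le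
  rcases hh.1.le_rpow_div_mul_right_or_left hN hr hc with hright | hleft
  · nth_rewrite 1 [← hrad]
    exact modelDensity_modelRadius_le_of_right hN.le hD hξ hw0.le hw1
      (hh.1.1 r ⟨hr.1.le, hr.2.le⟩) hrad.le (hh.one_sub_mul_le_of_right hN hr hrw hc hright)
  · exact modelDensity_le_of_left (by linarith) hD hξ hw0 hw1.le hrad
      (hh.mul_le_of_left hN hr hrw hc hleft)

end IsProbCDDensity

/-- Reduction to model densities: if `w ≤ w̄_N` and `D' h(r_h(w)) ≤ 2 N w^{1-1/N}`, then there
is `ξ ≥ 0` with `r_{N,D'}(ξ, w) ≤ r_h(w)` and `h_{N,D'}(ξ, r_{N,D'}(ξ, w)) ≤ h(r_h(w))`.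
Here `r = r_h(w)` is characterized by `r ∈ (0, D')` and `∫_0^r h = w`. -/
theorem reduction_to_model_density (N : ℝ) (hN : 1 < N) :
    ∃ wbar : ℝ, 0 < wbar ∧
      ∀ D' : ℝ, 0 < D' →
      ∀ h : ℝ → ℝ, IsProbCDDensity N D' h →
      ∀ w : ℝ, 0 < w → w ≤ wbar →
      ∀ r : ℝ, r ∈ Set.Ioo 0 D' → (∫ x in (0:ℝ)..r, h x) = w →
        D' * h r ≤ 2 * N * w ^ (1 - 1 / N) →
        ∃ ξ : ℝ, 0 ≤ ξ ∧ modelRadius N D' ξ w ≤ r ∧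
          modelDensity N D' ξ (modelRadius N D' ξ w) ≤ h r := by
  refine ⟨massThreshold N, massThreshold_pos N, fun D' hD' h hh w hw0 hwle r hr hrw hhyp => ?_⟩
  have hw_half : w ≤ 1 / 2 := hwle.trans (min_le_left _ _)
  have hsmall := rpow_le_of_le_massThreshold hN hw0.le hwle
  rcases le_or_gt (modelRadius N D' 0 w) r with h0 | h0
  · exact ⟨0, le_rfl, h0,
      hh.modelDensity_modelRadius_zero_le hN hr hrw hw0.le (by linarith) h0⟩
  · have hmass := hh.two_rpow_mul_le hN hr hrw hw0 hw_half hsmall hhyp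
    obtain ⟨ξ, hξ, hrad⟩ := exists_modelRadius_eq (by linarith) h0
      (modelRadius_one_le hN.le hD' hw0.le hr.1.le hmass)
    refine ⟨ξ, hξ.1, hrad.le, ?_⟩
    rw [hrad]
    exact hh.modelDensity_le_of_modelRadius_eq hN hr hrw hw0 (by linarith) hξ.1 hrad
end
end
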